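/- arXiv:0910.4797 — 5 statements merged into one kernel-verified Lean document; each statement's English description precedes it below -/
import Mathlib

section
/- Let T be a nondegenerate tile (a finite hereditary subset of ℕ² with at least 2 elements) with coordinatewise supremum (c₁, c₂), and let n ∈ ℕ². Then the translate T + n + e₁ - e₂ (when it lies in ℕ²) satisfies: (T \ {c₁e₁}) + n + e₁ - e₂ ⊆ (T + n + e₁) ∪ (T + n - e₂), i.e., every point of the translated tile except the corner c₁e₁ + n + e₁ - e₂ lies in the union of the two adjacent translates. -/
lemma pred_snd_mem_or_succ_fst_mem {T : Set (ℕ × ℕ)} {c1 : ℕ}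
    (hher : ∀ n ∈ T, ∀ m : ℕ × ℕ, m ≤ n → m ∈ T) (hmem1 : (c1, 0) ∈ T)
    {i : ℕ × ℕ} (hi : i ∈ T) (hle : i.1 ≤ c1) (hne : i ≠ (c1, 0)) :
    (0 < i.2 ∧ (i.1, i.2 - 1) ∈ T) ∨ (i.2 = 0 ∧ (i.1 + 1, 0) ∈ T) := by
  rcases Nat.eq_zero_or_pos i.2 with h2 | h2
  · have hlt : i.1 < c1 := hle.lt_of_ne fun h => hne (Prod.ext h h2)
    exact Or.inr ⟨h2, hher _ hmem1 _ ⟨hlt, le_rfl⟩⟩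
  · exact Or.inl ⟨h2, hher _ hi _ ⟨le_rfl, Nat.sub_le _ _⟩⟩

theorem stmt_4_general (T : Set (ℕ × ℕ)) (c1 c2 : ℕ)
    (hher : ∀ n ∈ T, ∀ m : ℕ × ℕ, m ≤ n → m ∈ T)
    (hub : ∀ j ∈ T, j.1 ≤ c1 ∧ j.2 ≤ c2)
    (hmem1 : ((c1 : ℕ), (0 : ℕ)) ∈ T)
    (n : ℕ × ℕ) :
    ∀ i ∈ T, i ≠ (c1, 0) →
      (i.1 + n.1 + 1, i.2 + n.2 - 1) ∈
        ((fun t : ℕ × ℕ => (t.1 + n.1 + 1, t.2 + n.2)) '' T ∪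
         (fun t : ℕ × ℕ => (t.1 + n.1, t.2 + n.2 - 1)) '' T) := by
  intro i hi hne
  rcases pred_snd_mem_or_succ_fst_mem hher hmem1 hi (hub i hi).1 hne with
    ⟨hpos, hbelow⟩ | ⟨hzero, hright⟩
  · refine Or.inl ⟨_, hbelow, ?_⟩
    simp only [Prod.mk.injEq, true_and]
    omega
  · refine Or.inr ⟨_, hright, ?_⟩
    simp only [Prod.mk.injEq]
    omega

/-- For a nondegenerate tile `T` with coordinatewise supremum `(c₁, c₂)` and `n ∈ ℕ²`
with `n₂ ≥ 1`, every point of the translate `(T \ {c₁e₁}) + n + e₁ - e₂` lies in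
`(T + n + e₁) ∪ (T + n - e₂)`. -/
theorem stmt_4 (T : Set (ℕ × ℕ)) (c1 c2 : ℕ) (hfin : T.Finite)
    (hher : ∀ n ∈ T, ∀ m : ℕ × ℕ, m ≤ n → m ∈ T)
    (hcard : 2 ≤ T.ncard)
    (hub : ∀ j ∈ T, j.1 ≤ c1 ∧ j.2 ≤ c2)
    (hmem1 : ((c1 : ℕ), (0 : ℕ)) ∈ T) (hmem2 : ((0 : ℕ), (c2 : ℕ)) ∈ T)
    (n : ℕ × ℕ) (hn : 1 ≤ n.2) :
    ∀ i ∈ T, i ≠ (c1, 0) →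
      (i.1 + n.1 + 1, i.2 + n.2 - 1) ∈
        ((fun t : ℕ × ℕ => (t.1 + n.1 + 1, t.2 + n.2)) '' T ∪
         (fun t : ℕ × ℕ => (t.1 + n.1, t.2 + n.2 - 1)) '' T) :=
  stmt_4_general T c1 c2 hher hub hmem1 n
end

section
/- Let v : T → A belong to the vertex set Λ⁰ = {F_{p,a}}. Then the number of vertices u ∈ Λ⁰ such that v(m) = u(m - e₁) for every m ∈ T ∩ (T + e₁) is exactly |A|^{c₂}. -/
/-!
A vertex `u` receiving a blue edge from `v` is forced to equal `v(n + e₁)` at every `n ∈ T`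
with `n + e₁ ∈ T`, and being of the form `F_{p,a}` forces `u(c₁e₁) = f_p(u(c₂e₂))`. The
remaining points, the right boundary of `T` minus `c₁e₁`, carry free values: since `T` is
down-closed, the right boundary has exactly one point in each of the rows `0, …, c₂`, so
there are `c₂` free points.
-/

/-- The vertex `F_{p,a} : T → A` associated to basic data, defined by `F_{p,a}(c₂e₂) = a`,
`F_{p,a}(c₁e₁) = f_p(a)` and `F_{p,a}|_P = p`, where `P = T \ {c₁e₁, c₂e₂}`. -/
def Fgen (c1 c2 : ℕ) (T : Finset (ℕ × ℕ)) {A : Type}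
    (f : (↥((T.erase (c1, 0)).erase ((0 : ℕ), c2)) → A) → A → A)
    (p : ↥((T.erase (c1, 0)).erase ((0 : ℕ), c2)) → A) (a : A) :
    ↥T → A :=
  fun t =>
    if h0 : t.val = ((0 : ℕ), c2) then a
    else if h1 : t.val = (c1, 0) then f p a
    else p ⟨t.val, Finset.mem_erase.mpr ⟨h0, Finset.mem_erase.mpr ⟨h1, t.2⟩⟩⟩

open Finset

def rightBoundary (T : Finset (ℕ × ℕ)) : Finset (ℕ × ℕ) :=
  T.filter fun n => (n.1 + 1, n.2) ∉ T

section RightBoundary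

variable {T : Finset (ℕ × ℕ)}

@[simp]
lemma mem_rightBoundary {n : ℕ × ℕ} : n ∈ rightBoundary T ↔ n ∈ T ∧ (n.1 + 1, n.2) ∉ T :=
  mem_filter

lemma injOn_snd_rightBoundary (hT : ∀ n ∈ T, ∀ m, m ≤ n → m ∈ T) :
    Set.InjOn Prod.snd (rightBoundary T : Set (ℕ × ℕ)) := by
  have key : ∀ a ∈ rightBoundary T, ∀ b ∈ rightBoundary T, a.2 = b.2 → a.1 ≤ b.1 := by
    intro a ha b hb h
    by_contra! hlt
    exact (mem_rightBoundary.1 hb).2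
      (hT a (mem_rightBoundary.1 ha).1 _ (Prod.mk_le_mk.2 ⟨hlt, h.ge⟩))
  intro a ha b hb h
  exact Prod.ext (le_antisymm (key a ha b hb h) (key b hb a ha h.symm)) h

lemma image_snd_rightBoundary : (rightBoundary T).image Prod.snd = T.image Prod.snd := by
  refine (image_subset_image (filter_subset _ T)).antisymm fun j hj => ?_
  obtain ⟨m, hm, rfl⟩ := mem_image.1 hj
  obtain ⟨n, hn, hmax⟩ := (T.filter (·.2 = m.2)).exists_max_image Prod.fst
    ⟨m, mem_filter.2 ⟨hm, rfl⟩⟩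
  rw [mem_filter] at hn
  refine mem_image.2 ⟨n, mem_rightBoundary.2 ⟨hn.1, fun h => ?_⟩, hn.2⟩
  exact (hmax _ (mem_filter.2 ⟨h, hn.2⟩)).not_gt (Nat.lt_succ_self n.1)

lemma image_snd_eq_range {c2 : ℕ} (hT : ∀ n ∈ T, ∀ m, m ≤ n → m ∈ T)
    (hub : ∀ j ∈ T, j.2 ≤ c2) (h : ((0 : ℕ), c2) ∈ T) :
    T.image Prod.snd = range (c2 + 1) := by
  ext j
  simp only [mem_image, mem_range]
  constructor
  · rintro ⟨n, hn, rfl⟩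
    exact Nat.lt_succ_of_le (hub n hn)
  · intro hj
    exact ⟨(0, j), hT _ h _ (Prod.mk_le_mk.2 ⟨le_rfl, Nat.le_of_lt_succ hj⟩), rfl⟩

lemma card_rightBoundary {c2 : ℕ} (hT : ∀ n ∈ T, ∀ m, m ≤ n → m ∈ T)
    (hub : ∀ j ∈ T, j.2 ≤ c2) (h : ((0 : ℕ), c2) ∈ T) :
    #(rightBoundary T) = c2 + 1 := by
  rw [← card_image_of_injOn (injOn_snd_rightBoundary hT), image_snd_rightBoundary,
    image_snd_eq_range hT hub h, card_range]

end RightBoundary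

def IsBlueEdge {T : Finset (ℕ × ℕ)} {A : Type} (v u : ↥T → A) : Prop :=
  ∀ n (hn : n ∈ T) (h : (n.1 + 1, n.2) ∈ T), u ⟨n, hn⟩ = v ⟨(n.1 + 1, n.2), h⟩

lemma isBlueEdge_iff {T : Finset (ℕ × ℕ)} {A : Type} {v u : ↥T → A} :
    IsBlueEdge v u ↔ ∀ (m : ℕ × ℕ) (hm : m ∈ T), 1 ≤ m.1 → ∀ hm' : (m.1 - 1, m.2) ∈ T,
      v ⟨m, hm⟩ = u ⟨(m.1 - 1, m.2), hm'⟩ := by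
  constructor
  · rintro hu ⟨_ | i, j⟩ hm hi hm'
    · exact absurd hi (Nat.not_succ_le_zero 0)
    · exact (hu _ hm' hm).symm
  · intro hu n hn h
    exact (hu _ h (Nat.le_add_left 1 n.1) hn).symm

section Vertex

variable {c1 c2 : ℕ} {T : Finset (ℕ × ℕ)} {A : Type}
  {f : (↥((T.erase (c1, 0)).erase ((0 : ℕ), c2)) → A) → A → A}

def vertexOf (f : (↥((T.erase (c1, 0)).erase ((0 : ℕ), c2)) → A) → A → A)
    (h2 : ((0 : ℕ), c2) ∈ T) (w : ↥T → A) : ↥T → A :=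
  Fgen c1 c2 T f (fun x => w ⟨x, mem_of_mem_erase (mem_of_mem_erase x.2)⟩) (w ⟨(0, c2), h2⟩)

lemma vertexOf_apply_of_ne (h2 : ((0 : ℕ), c2) ∈ T) (w : ↥T → A) {t : ↥T}
    (ht : t.1 ≠ (c1, 0)) : vertexOf f h2 w t = w t := by
  unfold vertexOf Fgen
  split_ifs with h0
  · exact congrArg w (Subtype.ext h0).symm
  · rfl

lemma Fgen_eq_of_forall_ne (hne : ((0 : ℕ), c2) ≠ (c1, 0)) (h2 : ((0 : ℕ), c2) ∈ T)
    {p p' : ↥((T.erase (c1, 0)).erase ((0 : ℕ), c2)) → A} {a a' : A}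
    (h : ∀ t : ↥T, t.1 ≠ (c1, 0) → Fgen c1 c2 T f p a t = Fgen c1 c2 T f p' a' t) :
    Fgen c1 c2 T f p a = Fgen c1 c2 T f p' a' := by
  have hp : p = p' := funext fun x => by
    obtain ⟨hx0, hx⟩ := mem_erase.1 x.2
    obtain ⟨hx1, hxT⟩ := mem_erase.1 hx
    simpa [Fgen, hx0, hx1] using h ⟨x, hxT⟩ hx1
  have ha : a = a' := by simpa [Fgen] using h ⟨_, h2⟩ hne
  rw [hp, ha]

end Vertex

/-- The last branch is a placeholder: below it is reached only at `c₁e₁`, whose value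
`vertexOf` overwrites. -/
def shiftFill {T Q : Finset (ℕ × ℕ)} {A : Type} (v : ↥T → A) (g : ↥Q → A) : ↥T → A :=
  fun t => if h : (t.1.1 + 1, t.1.2) ∈ T then v ⟨_, h⟩
    else if hq : t.1 ∈ Q then g ⟨t, hq⟩ else v t

section Count

variable {c1 c2 : ℕ} {T : Finset (ℕ × ℕ)} {A : Type}
  {f : (↥((T.erase (c1, 0)).erase ((0 : ℕ), c2)) → A) → A → A} {v : ↥T → A}

lemma shiftFill_of_mem_rightBoundary {Q : Finset (ℕ × ℕ)} (g : ↥Q → A) {t : ↥T}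
    (hQ : Q ⊆ rightBoundary T) (hq : t.1 ∈ Q) : shiftFill v g t = g ⟨t, hq⟩ := by
  rw [shiftFill, dif_neg (mem_rightBoundary.1 (hQ hq)).2, dif_pos hq]

lemma shiftFill_restrict {u : ↥T → A} (hu : IsBlueEdge v u) {t : ↥T} (ht : t.1 ≠ (c1, 0)) :
    shiftFill (Q := (rightBoundary T).erase (c1, 0)) v
      (fun q => u ⟨q, (mem_rightBoundary.1 (mem_of_mem_erase q.2)).1⟩) t = u t := by
  unfold shiftFill
  split_ifs with h hq
  · exact (hu _ t.2 h).symm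
  · rfl
  · exact absurd (mem_erase.2 ⟨ht, mem_rightBoundary.2 ⟨t.2, h⟩⟩) hq

lemma isBlueEdge_vertexOf_shiftFill (hout : (c1 + 1, 0) ∉ T) (h2 : ((0 : ℕ), c2) ∈ T)
    (g : ↥((rightBoundary T).erase (c1, 0)) → A) :
    IsBlueEdge v (vertexOf f h2 (shiftFill v g)) := by
  intro n hn h
  have hne : n ≠ (c1, 0) := by
    rintro rfl
    exact hout h
  rw [vertexOf_apply_of_ne h2 _ hne, shiftFill, dif_pos h]

lemma injective_vertexOf_shiftFill (h2 : ((0 : ℕ), c2) ∈ T) :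
    Function.Injective fun g : ↥((rightBoundary T).erase (c1, 0)) → A =>
      vertexOf f h2 (shiftFill v g) := by
  intro g g' h
  funext q
  have hQ := erase_subset (c1, 0) (rightBoundary T)
  have hq := mem_erase.1 q.2
  have := congrFun h ⟨q, (mem_rightBoundary.1 hq.2).1⟩
  dsimp only at this
  rwa [vertexOf_apply_of_ne h2 _ hq.1, vertexOf_apply_of_ne h2 _ hq.1,
    shiftFill_of_mem_rightBoundary _ hQ q.2, shiftFill_of_mem_rightBoundary _ hQ q.2] at this

lemma setOf_isBlueEdge_eq_range (hne : ((0 : ℕ), c2) ≠ (c1, 0)) (hout : (c1 + 1, 0) ∉ T)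
    (h2 : ((0 : ℕ), c2) ∈ T) :
    {u : ↥T → A | (∃ p a, u = Fgen c1 c2 T f p a) ∧ IsBlueEdge v u} =
      Set.range fun g : ↥((rightBoundary T).erase (c1, 0)) → A =>
        vertexOf f h2 (shiftFill v g) := by
  ext u
  constructor
  · rintro ⟨⟨p, a, rfl⟩, hu⟩
    refine ⟨fun q => Fgen c1 c2 T f p a ⟨q, (mem_rightBoundary.1 (mem_of_mem_erase q.2)).1⟩,
      (Fgen_eq_of_forall_ne hne h2 fun t ht => ?_).symm⟩
    change _ = vertexOf f h2 _ t
    rw [vertexOf_apply_of_ne h2 _ ht, shiftFill_restrict hu ht]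
  · rintro ⟨g, rfl⟩
    exact ⟨⟨_, _, rfl⟩, isBlueEdge_vertexOf_shiftFill hout h2 g⟩

end Count

lemma corners_ne_of_two_le_card {c1 c2 : ℕ} {T : Finset (ℕ × ℕ)}
    (hub : ∀ j ∈ T, j.1 ≤ c1 ∧ j.2 ≤ c2) (hnd : 2 ≤ #T) : ((0 : ℕ), c2) ≠ (c1, 0) := by
  intro h
  obtain ⟨hc2, hc1⟩ := Prod.mk.inj h
  have : #T ≤ 1 := card_le_one.2 fun a ha b hb => by
    have := hub a ha
    have := hub b hb
    ext <;> omega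
  omega

theorem stmt_7_general (c1 c2 : ℕ) (T : Finset (ℕ × ℕ)) (A : Type) [Fintype A]
    (hher : ∀ n ∈ T, ∀ m : ℕ × ℕ, m ≤ n → m ∈ T)
    (hub : ∀ j ∈ T, j.1 ≤ c1 ∧ j.2 ≤ c2)
    (hmem1 : ((c1 : ℕ), (0 : ℕ)) ∈ T) (hmem2 : ((0 : ℕ), (c2 : ℕ)) ∈ T)
    (hnd : 2 ≤ T.card)
    (f : (↥((T.erase (c1, 0)).erase ((0 : ℕ), c2)) → A) → A → A)
    (v : ↥T → A) :
    Set.ncard {u : ↥T → A |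
        (∃ p a, u = Fgen c1 c2 T f p a) ∧
        ∀ (m : ℕ × ℕ) (hm : m ∈ T), 1 ≤ m.1 → ∀ hm' : (m.1 - 1, m.2) ∈ T,
          v ⟨m, hm⟩ = u ⟨(m.1 - 1, m.2), hm'⟩} =
      Fintype.card A ^ c2 := by
  have hout : (c1 + 1, 0) ∉ T := fun h => by
    have := (hub _ h).1
    omega
  have hcorner : (c1, 0) ∈ rightBoundary T := mem_rightBoundary.2 ⟨hmem1, hout⟩
  simp_rw [← isBlueEdge_iff]
  rw [setOf_isBlueEdge_eq_range (corners_ne_of_two_le_card hub hnd) hout hmem2,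
    Set.ncard_range_of_injective (injective_vertexOf_shiftFill hmem2), Nat.card_fun,
    Nat.card_eq_fintype_card, Nat.card_eq_finsetCard, card_erase_of_mem hcorner,
    card_rightBoundary hher (fun j hj => (hub j hj).2) hmem2, Nat.add_sub_cancel]

/-- If `v : T → A` is a vertex of the 2-graph associated to basic data, the number of
vertices `u` with `v(m) = u(m - e₁)` for every `m ∈ T ∩ (T + e₁)` (i.e. receiving a blue
edge from `v`) is exactly `|A|^{c₂}`. -/
theorem stmt_7 (c1 c2 : ℕ) (T : Finset (ℕ × ℕ)) (A : Type) [Fintype A] [Nonempty A]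
    (hher : ∀ n ∈ T, ∀ m : ℕ × ℕ, m ≤ n → m ∈ T)
    (hub : ∀ j ∈ T, j.1 ≤ c1 ∧ j.2 ≤ c2)
    (hmem1 : ((c1 : ℕ), (0 : ℕ)) ∈ T) (hmem2 : ((0 : ℕ), (c2 : ℕ)) ∈ T)
    (hnd : 2 ≤ T.card)
    (f : (↥((T.erase (c1, 0)).erase ((0 : ℕ), c2)) → A) → A → A)
    (hf : ∀ p, Function.Bijective (f p))
    (v : ↥T → A) (hv : ∃ p a, v = Fgen c1 c2 T f p a) :
    Set.ncard {u : ↥T → A |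
        (∃ p a, u = Fgen c1 c2 T f p a) ∧
        ∀ (m : ℕ × ℕ) (hm : m ∈ T), 1 ≤ m.1 → ∀ hm' : (m.1 - 1, m.2) ∈ T,
          v ⟨m, hm⟩ = u ⟨(m.1 - 1, m.2), hm'⟩} =
      Fintype.card A ^ c2 :=
  stmt_7_general c1 c2 T A hher hub hmem1 hmem2 hnd f v
end

section
/- Let T be a tile with coordinatewise maximum (c₁,c₂) and n ∈ ℕ². Then T(n) = {j ∈ ℕ² : there exists m with 0 ≤ m ≤ n and j - m ∈ T}, and the complement of T(m) ∪ (T(n) + m) inside T(m+n) is the disjoint union of the two rectangles BR = {j : c₁ + m₁ < j₁ ≤ c₁ + m₁ + n₁, j₂ < m₂} and UL = {j : j₁ < m₁, c₂ + m₂ < j₂ ≤ c₂ + m₂ + n₂}. -/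
/-- The region `T(n) = ⋃_{0 ≤ k ≤ n} (T + k)` determined by a tile `T` and `n ∈ ℕ²`. -/
def Treg (T : Set (ℕ × ℕ)) (n : ℕ × ℕ) : Set (ℕ × ℕ) :=
  {j | ∃ k : ℕ × ℕ, k ≤ n ∧ ∃ t ∈ T, j = t + k}

/-!
For a hereditary `T`, the union `T(p) = ⋃_{k ≤ p} (T + k)` is simply `{j | j - p ∈ T}`
(truncated subtraction), and `j ∈ T(n) + m` iff `m ≤ j` and `j - (m + n) ∈ T`. So a point of
`T(m + n)` missed by `T(m) ∪ (T(n) + m)` has `j₁ < m₁` or `j₂ < m₂`; then `j - m` and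
`j - (m + n)` lie on a coordinate axis, where `T` is the segment up to its corner `(c₁, 0)`
resp. `(0, c₂)`, and the two membership conditions become the bounds of the rectangles.
-/

section Tile

variable {T : Set (ℕ × ℕ)}

theorem mem_Treg_iff (hT : IsLowerSet T) {p j : ℕ × ℕ} :
    j ∈ Treg T p ↔ j - p ∈ T := by
  constructor
  · rintro ⟨k, hk, t, ht, rfl⟩
    exact hT (tsub_le_iff_right.2 (add_le_add_right hk t)) ht
  · intro h
    exact ⟨j - (j - p), tsub_le_iff_right.2 le_add_tsub, j - p, h,
      (add_tsub_cancel_of_le tsub_le_self).symm⟩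

theorem Treg_eq_setOf_exists_sub_mem (hT : IsLowerSet T) (n : ℕ × ℕ) :
    Treg T n = {j | ∃ k ≤ n, j - k ∈ T} := by
  ext j
  rw [mem_Treg_iff hT]
  exact ⟨fun h => ⟨n, le_rfl, h⟩, fun ⟨k, hk, h⟩ => hT (tsub_le_tsub_left hk j) h⟩

theorem mem_image_add_Treg_iff (hT : IsLowerSet T) {m n j : ℕ × ℕ} :
    j ∈ (· + m) '' Treg T n ↔ m ≤ j ∧ j - (m + n) ∈ T := by
  simp_rw [Set.mem_image, mem_Treg_iff hT]
  constructor
  · rintro ⟨i, hi, rfl⟩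
    rwa [add_comm m, add_tsub_add_eq_tsub_right, and_iff_right le_add_self]
  · rintro ⟨hmj, h⟩
    exact ⟨j - m, by rwa [tsub_tsub], tsub_add_cancel_of_le hmj⟩

variable {c1 c2 : ℕ}

theorem mk_zero_mem_iff (hT : IsLowerSet T) (hub : ∀ j ∈ T, j.1 ≤ c1)
    (hc1 : (c1, 0) ∈ T) (a : ℕ) : (a, 0) ∈ T ↔ a ≤ c1 :=
  ⟨hub _, fun h => hT (Prod.mk_le_mk.2 ⟨h, le_rfl⟩) hc1⟩

theorem zero_mk_mem_iff (hT : IsLowerSet T) (hub : ∀ j ∈ T, j.2 ≤ c2)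
    (hc2 : (0, c2) ∈ T) (b : ℕ) : (0, b) ∈ T ↔ b ≤ c2 :=
  ⟨hub _, fun h => hT (Prod.mk_le_mk.2 ⟨le_rfl, h⟩) hc2⟩

theorem Treg_add_diff_eq_union (hT : IsLowerSet T) (hub : ∀ j ∈ T, j.1 ≤ c1 ∧ j.2 ≤ c2)
    (hc1 : (c1, 0) ∈ T) (hc2 : (0, c2) ∈ T) (m n : ℕ × ℕ) :
    Treg T (m + n) \ (Treg T m ∪ (· + m) '' Treg T n) =
      {j | c1 + m.1 < j.1 ∧ j.1 ≤ c1 + m.1 + n.1 ∧ j.2 < m.2} ∪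
      {j | j.1 < m.1 ∧ c2 + m.2 < j.2 ∧ j.2 ≤ c2 + m.2 + n.2} := by
  ext j
  simp only [Set.mem_sdiff, Set.mem_union, mem_Treg_iff hT, mem_image_add_Treg_iff hT,
    Set.mem_ofPred_eq]
  rcases lt_or_ge j.2 m.2 with h2 | h2
  · have hm : j - m = (j.1 - m.1, 0) := Prod.ext rfl (Nat.sub_eq_zero_of_le h2.le)
    have hmn : j - (m + n) = (j.1 - (m.1 + n.1), 0) := Prod.ext rfl (by simp; omega)
    have hax := mk_zero_mem_iff hT (fun j hj => (hub j hj).1) hc1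
    rw [hm, hmn, hax, hax, Prod.le_def]
    omega
  rcases lt_or_ge j.1 m.1 with h1 | h1
  · have hm : j - m = (0, j.2 - m.2) := Prod.ext (Nat.sub_eq_zero_of_le h1.le) rfl
    have hmn : j - (m + n) = (0, j.2 - (m.2 + n.2)) := Prod.ext (by simp; omega) rfl
    have hax := zero_mk_mem_iff hT (fun j hj => (hub j hj).2) hc2
    rw [hm, hmn, hax, hax, Prod.le_def]
    omega
  · have hmj : m ≤ j := Prod.mk_le_mk.2 ⟨h1, h2⟩
    simp only [hmj, true_and]
    exact iff_of_false (fun h => h.2 (Or.inr h.1)) (by omega)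

end Tile

theorem stmt_9_general (T : Set (ℕ × ℕ)) (c1 c2 : ℕ)
    (hher : ∀ n ∈ T, ∀ m : ℕ × ℕ, m ≤ n → m ∈ T)
    (hub : ∀ j ∈ T, j.1 ≤ c1 ∧ j.2 ≤ c2)
    (hmem1 : ((c1 : ℕ), (0 : ℕ)) ∈ T) (hmem2 : ((0 : ℕ), (c2 : ℕ)) ∈ T)
    (m n : ℕ × ℕ) :
    (Treg T n = {j : ℕ × ℕ | ∃ k : ℕ × ℕ, k ≤ n ∧ j - k ∈ T}) ∧
    (Treg T (m + n) \ (Treg T m ∪ (fun j => j + m) '' Treg T n) =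
      {j : ℕ × ℕ | c1 + m.1 < j.1 ∧ j.1 ≤ c1 + m.1 + n.1 ∧ j.2 < m.2} ∪
      {j : ℕ × ℕ | j.1 < m.1 ∧ c2 + m.2 < j.2 ∧ j.2 ≤ c2 + m.2 + n.2}) ∧
    ({j : ℕ × ℕ | c1 + m.1 < j.1 ∧ j.1 ≤ c1 + m.1 + n.1 ∧ j.2 < m.2} ∩
      {j : ℕ × ℕ | j.1 < m.1 ∧ c2 + m.2 < j.2 ∧ j.2 ≤ c2 + m.2 + n.2}) = ∅ := by
  have hT : IsLowerSet T := fun _ _ hle hmem => hher _ hmem _ hle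
  refine ⟨Treg_eq_setOf_exists_sub_mem hT n, Treg_add_diff_eq_union hT hub hmem1 hmem2 m n, ?_⟩
  ext j
  simp only [Set.mem_inter_iff, Set.mem_ofPred_eq, Set.mem_empty_iff_false, iff_false]
  omega

/-- `T(n) = {j : ∃ m ≤ n, j - m ∈ T}`, and the complement of `T(m) ∪ (T(n) + m)` inside
`T(m+n)` is the disjoint union of the rectangles
`BR = {j : c₁ + m₁ < j₁ ≤ c₁ + m₁ + n₁, j₂ < m₂}` and
`UL = {j : j₁ < m₁, c₂ + m₂ < j₂ ≤ c₂ + m₂ + n₂}`. -/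
theorem stmt_9 (T : Set (ℕ × ℕ)) (c1 c2 : ℕ) (hfin : T.Finite) (hne : T.Nonempty)
    (hher : ∀ n ∈ T, ∀ m : ℕ × ℕ, m ≤ n → m ∈ T)
    (hub : ∀ j ∈ T, j.1 ≤ c1 ∧ j.2 ≤ c2)
    (hmem1 : ((c1 : ℕ), (0 : ℕ)) ∈ T) (hmem2 : ((0 : ℕ), (c2 : ℕ)) ∈ T)
    (m n : ℕ × ℕ) :
    (Treg T n = {j : ℕ × ℕ | ∃ k : ℕ × ℕ, k ≤ n ∧ j - k ∈ T}) ∧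
    (Treg T (m + n) \ (Treg T m ∪ (fun j => j + m) '' Treg T n) =
      {j : ℕ × ℕ | c1 + m.1 < j.1 ∧ j.1 ≤ c1 + m.1 + n.1 ∧ j.2 < m.2} ∪
      {j : ℕ × ℕ | j.1 < m.1 ∧ c2 + m.2 < j.2 ∧ j.2 ≤ c2 + m.2 + n.2}) ∧
    ({j : ℕ × ℕ | c1 + m.1 < j.1 ∧ j.1 ≤ c1 + m.1 + n.1 ∧ j.2 < m.2} ∩
      {j : ℕ × ℕ | j.1 < m.1 ∧ c2 + m.2 < j.2 ∧ j.2 ≤ c2 + m.2 + n.2}) = ∅ :=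
  stmt_9_general T c1 c2 hher hub hmem1 hmem2 m n
end

section
/- Let Λ be a row-finite 2-graph with no sources. Then Λ is aperiodic (in the sense that for every vertex v and all distinct m, n ∈ ℕ² with m ∧ n = 0 there is a path λ with range v, d(λ) ≥ m ∨ n, and λ(m, m + d(λ) - (m∨n)) ≠ λ(n, n + d(λ) - (m∨n))) if and only if the same condition holds for all distinct m, n ∈ ℕ² without the assumption m ∧ n = 0. -/
/-- A 2-graph: a countable category of paths equipped with a degree functor
`d : Λ → ℕ²` satisfying the unique factorisation property. Vertices are identified with
the paths of degree `0`; `seg p m n` is the middle segment `p(m, n)` of a path `p`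
(for `m ≤ n ≤ d p`) coming from the factorisation property. -/
structure TwoGraph where
  Path : Type
  countable : Countable Path
  d : Path → ℕ × ℕ
  r : Path → Path
  s : Path → Path
  comp : Path → Path → Path
  seg : Path → ℕ × ℕ → ℕ × ℕ → Path
  d_r : ∀ p, d (r p) = 0
  d_s : ∀ p, d (s p) = 0
  r_vertex : ∀ p, d p = 0 → r p = p
  s_vertex : ∀ p, d p = 0 → s p = p
  d_comp : ∀ p q, s p = r q → d (comp p q) = d p + d q
  r_comp : ∀ p q, s p = r q → r (comp p q) = r p
  s_comp : ∀ p q, s p = r q → s (comp p q) = s q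
  comp_assoc : ∀ p q u, s p = r q → s q = r u → comp (comp p q) u = comp p (comp q u)
  id_comp : ∀ p, comp (r p) p = p
  comp_id : ∀ p, comp p (s p) = p
  d_seg : ∀ p m n, m ≤ n → n ≤ d p → d (seg p m n) = n - m
  seg_zero_d : ∀ p, seg p 0 (d p) = p
  seg_factor : ∀ p m, m ≤ d p →
    s (seg p 0 m) = r (seg p m (d p)) ∧ comp (seg p 0 m) (seg p m (d p)) = p
  factor_unique : ∀ p q1 q2, s q1 = r q2 → comp q1 q2 = p →
    q1 = seg p 0 (d q1) ∧ q2 = seg p (d q1) (d p)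
  seg_seg : ∀ p m n a b, m ≤ n → n ≤ d p → a ≤ b → b ≤ n - m →
    seg (seg p m n) a b = seg p (m + a) (m + b)

/-- Aperiodicity: for every vertex `v` and all distinct `m, n ∈ ℕ²` with `m ∧ n = 0`
there is a path `λ` with range `v`, `d(λ) ≥ m ∨ n`, and
`λ(m, m + d(λ) - (m∨n)) ≠ λ(n, n + d(λ) - (m∨n))`. -/
def TwoGraph.Aperiodic (Λ : TwoGraph) : Prop :=
  ∀ v, Λ.d v = 0 → ∀ m n : ℕ × ℕ, m ≠ n → m ⊓ n = 0 →
    ∃ p, Λ.r p = v ∧ m ⊔ n ≤ Λ.d p ∧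
      Λ.seg p m (m + Λ.d p - (m ⊔ n)) ≠ Λ.seg p n (n + Λ.d p - (m ⊔ n))

/-- The Robertson–Sims condition: the same condition for all distinct `m, n ∈ ℕ²`,
without the assumption `m ∧ n = 0`. -/
def TwoGraph.RobertsonSims (Λ : TwoGraph) : Prop :=
  ∀ v, Λ.d v = 0 → ∀ m n : ℕ × ℕ, m ≠ n →
    ∃ p, Λ.r p = v ∧ m ⊔ n ≤ Λ.d p ∧
      Λ.seg p m (m + Λ.d p - (m ⊔ n)) ≠ Λ.seg p n (n + Λ.d p - (m ⊔ n))

/-!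
Write `k = m ∧ n`. Prefixing a path `a` of degree `k` (one exists since there are no sources)
to a path `p` that separates `m - k` and `n - k` yields a path `a p` that separates `m` and `n`,
because the segments of `a p` beyond degree `k` are segments of `p`. Since `m - k` and `n - k`
have trivial meet, aperiodicity supplies such a `p`.
-/

namespace Prod

theorem add_sup_add_left (a m n : ℕ × ℕ) : (a + m) ⊔ (a + n) = a + m ⊔ n := by
  ext <;> simp only [fst_sup, snd_sup, fst_add, snd_add] <;> omega

theorem add_add_tsub_add_left {s e : ℕ × ℕ} (hs : s ≤ e) (a m : ℕ × ℕ) :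
    (a + m) + (a + e) - (a + s) = a + (m + e - s) := by
  obtain ⟨hs₁, hs₂⟩ := hs
  ext <;> simp only [fst_add, snd_add, fst_sub, snd_sub] <;> omega

theorem tsub_inf_inf_tsub_inf (m n : ℕ × ℕ) : (m - m ⊓ n) ⊓ (n - m ⊓ n) = 0 := by
  ext <;> simp only [fst_inf, snd_inf, fst_sub, snd_sub, fst_zero, snd_zero] <;> omega

end Prod

namespace TwoGraph

variable (Λ : TwoGraph)

/-- The condition on a path `λ` in `Aperiodic` and `RobertsonSims`. -/
def Separates (p : Λ.Path) (m n : ℕ × ℕ) : Prop :=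
  m ⊔ n ≤ Λ.d p ∧ Λ.seg p m (m + Λ.d p - (m ⊔ n)) ≠ Λ.seg p n (n + Λ.d p - (m ⊔ n))

variable {Λ}

theorem seg_comp_add {a p : Λ.Path} (h : Λ.s a = Λ.r p) {x y : ℕ × ℕ} (hxy : x ≤ y)
    (hy : y ≤ Λ.d p) : Λ.seg (Λ.comp a p) (Λ.d a + x) (Λ.d a + y) = Λ.seg p x y := by
  have hd := Λ.d_comp a p h
  conv_rhs => rw [(Λ.factor_unique _ a p h rfl).2]
  rw [Λ.seg_seg _ (Λ.d a) _ x y (hd ▸ le_self_add) le_rfl hxy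
    (by rwa [hd, add_tsub_cancel_left])]

theorem Separates.comp {a p : Λ.Path} (h : Λ.s a = Λ.r p) {m n : ℕ × ℕ}
    (hp : Λ.Separates p m n) : Λ.Separates (Λ.comp a p) (Λ.d a + m) (Λ.d a + n) := by
  obtain ⟨hle, hne⟩ := hp
  have window {x : ℕ × ℕ} (hx : x ≤ m ⊔ n) :
      x ≤ x + Λ.d p - m ⊔ n ∧ x + Λ.d p - m ⊔ n ≤ Λ.d p :=
    ⟨le_tsub_of_add_le_right (by gcongr),
      tsub_le_iff_right.2 (by rw [add_comm]; gcongr)⟩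
  have hm := window (le_sup_left : m ≤ m ⊔ n)
  have hn := window (le_sup_right : n ≤ m ⊔ n)
  rw [Separates, Λ.d_comp a p h, Prod.add_sup_add_left, Prod.add_add_tsub_add_left hle,
    Prod.add_add_tsub_add_left hle, seg_comp_add h hm.1 hm.2, seg_comp_add h hn.1 hn.2]
  exact ⟨by gcongr, hne⟩

end TwoGraph

/-- A row-finite 2-graph with no sources is aperiodic if and only if it satisfies the
Robertson–Sims condition. -/
theorem stmt_10 (Λ : TwoGraph)
    (hrf : ∀ v, Λ.d v = 0 → ∀ n : ℕ × ℕ,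
      {p | Λ.r p = v ∧ Λ.d p = n}.Finite ∧ {p | Λ.r p = v ∧ Λ.d p = n}.Nonempty) :
    Λ.Aperiodic ↔ Λ.RobertsonSims := by
  refine ⟨fun hA v hv m n hmn => ?_, fun hRS v hv m n hmn _ => hRS v hv m n hmn⟩
  obtain ⟨a, hra, hda⟩ := (hrf v hv (m ⊓ n)).2
  have hmn' : m - m ⊓ n ≠ n - m ⊓ n := (tsub_left_inj inf_le_left inf_le_right).not.2 hmn
  obtain ⟨p, hrp, hp⟩ :=
    hA (Λ.s a) (Λ.d_s a) _ _ hmn' (Prod.tsub_inf_inf_tsub_inf m n)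
  have hap := TwoGraph.Separates.comp hrp.symm hp
  rw [hda, add_tsub_cancel_of_le inf_le_left, add_tsub_cancel_of_le inf_le_right] at hap
  exact ⟨Λ.comp a p, by rw [Λ.r_comp a p hrp.symm, hra], hap⟩
end

section
/- Let T be a nondegenerate tile with c₂ = 0 and BD = (T, A, {f_p}) basic data. Then for each a ∈ A there is at most one vertex v ∈ {F_{p,b} : p ∈ A^P, b ∈ A} with v(j·e₁) = a for all 1 ≤ j ≤ c₁; namely, v is determined by v(0) = f_p⁻¹-data, i.e., v(0) must equal the unique b with f_{v|P}(b) = v(c₁e₁) where v|P ≡ a on P. -/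
/-- The tile `T = {0, e₁, …, c₁e₁}` of height `0`. -/
def T19 (c1 : ℕ) : Finset (ℕ × ℕ) := (Finset.range (c1 + 1)).image fun j => (j, 0)

/-- `P = T \ {0, c₁e₁}` for the flat tile (here `c₂e₂ = 0`). -/
def P19 (c1 : ℕ) : Finset (ℕ × ℕ) := ((T19 c1).erase (c1, 0)).erase (0, 0)

/-- The vertex `F_{p,b} : T → A`: `F_{p,b}(0) = F_{p,b}(c₂e₂) = b`,
`F_{p,b}(c₁e₁) = f_p(b)`, `F_{p,b}|_P = p`. -/
def F19 (c1 : ℕ) {A : Type} (f : (↥(P19 c1) → A) → A → A)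
    (p : ↥(P19 c1) → A) (b : A) : ↥(T19 c1) → A :=
  fun t =>
    if h0 : t.val = ((0 : ℕ), (0 : ℕ)) then b
    else if h1 : t.val = (c1, 0) then f p b
    else p ⟨t.val, Finset.mem_erase.mpr ⟨h0, Finset.mem_erase.mpr ⟨h1, t.2⟩⟩⟩

section FlatTile

variable {c1 : ℕ}

theorem mem_T19 {m : ℕ × ℕ} : m ∈ T19 c1 ↔ m.2 = 0 ∧ m.1 ≤ c1 := by
  obtain ⟨i, j⟩ := m
  simp only [T19, Finset.mem_image, Finset.mem_range, Prod.mk.injEq]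
  constructor
  · rintro ⟨i, hi, rfl, rfl⟩
    exact ⟨rfl, Nat.lt_succ_iff.mp hi⟩
  · rintro ⟨rfl, hi⟩
    exact ⟨i, Nat.lt_succ_iff.mpr hi, rfl, rfl⟩

theorem last_mem_T19 : ((c1, 0) : ℕ × ℕ) ∈ T19 c1 := mem_T19.mpr ⟨rfl, le_rfl⟩

theorem P19_subset_T19 : P19 c1 ⊆ T19 c1 := fun _ hm =>
  Finset.mem_of_mem_erase (Finset.mem_of_mem_erase hm)

theorem one_le_of_mem_P19 {m : ℕ × ℕ} (hm : m ∈ P19 c1) : 1 ≤ m.1 := by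
  obtain ⟨hm0, -, hmT⟩ := by simpa only [P19, Finset.mem_erase] using hm
  exact Nat.one_le_iff_ne_zero.mpr fun h => hm0 (Prod.ext h (mem_T19.mp hmT).1)

variable {A : Type} {f : (↥(P19 c1) → A) → A → A} {p : ↥(P19 c1) → A} {b : A}

theorem F19_apply_of_mem_P19 (x : ↥(P19 c1)) :
    F19 c1 f p b ⟨x, P19_subset_T19 x.2⟩ = p x := by
  obtain ⟨hx0, hx1, -⟩ := by simpa only [P19, Finset.mem_erase] using x.2
  simp only [F19, hx0, hx1, dif_neg, not_false_eq_true]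

theorem F19_apply_last (hc1 : 1 ≤ c1) : F19 c1 f p b ⟨(c1, 0), last_mem_T19⟩ = f p b := by
  have hne : ((c1, 0) : ℕ × ℕ) ≠ (0, 0) := fun h => by
    rw [Prod.mk.injEq] at h
    omega
  simp only [F19, hne, dif_neg, not_false_eq_true, dif_pos]

/-- On `T ∩ (T + e₁)` the vertex `F_{p,b}` shows `p` (on `P`) and `f_p(b)` (at `c₁e₁`), and `b` is
recovered from `f_p(b)` by injectivity of `f_p`. -/
theorem F19_eq_of_eq_on_one_le (hc1 : 1 ≤ c1) (hf : ∀ p, Function.Injective (f p))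
    {q : ↥(P19 c1) → A} {c : A}
    (h : ∀ (m : ℕ × ℕ) (hm : m ∈ T19 c1), 1 ≤ m.1 → F19 c1 f p b ⟨m, hm⟩ = F19 c1 f q c ⟨m, hm⟩) :
    F19 c1 f p b = F19 c1 f q c := by
  have hpq : p = q := funext fun x => by
    simpa only [F19_apply_of_mem_P19] using h x (P19_subset_T19 x.2) (one_le_of_mem_P19 x.2)
  subst hpq
  have hbc : f p b = f p c := by
    simpa only [F19_apply_last hc1] using h (c1, 0) last_mem_T19 hc1
  rw [hf p hbc]

end FlatTile

theorem stmt_19_general (c1 : ℕ) (hc1 : 1 ≤ c1) (A : Type)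
    (f : (↥(P19 c1) → A) → A → A) (hf : ∀ p, Function.Bijective (f p)) (a : A) :
    Set.Subsingleton {v : ↥(T19 c1) → A |
      (∃ p b, v = F19 c1 f p b) ∧
      ∀ (m : ℕ × ℕ) (hm : m ∈ T19 c1), 1 ≤ m.1 → v ⟨m, hm⟩ = a} := by
  rintro _ ⟨⟨p, b, rfl⟩, hva⟩ _ ⟨⟨q, c, rfl⟩, hwa⟩
  exact F19_eq_of_eq_on_one_le hc1 (fun p => (hf p).injective) fun m hm h1 =>
    (hva m hm h1).trans (hwa m hm h1).symm

/-- For a nondegenerate tile with `c₂ = 0` and each `a ∈ A`, there is at most one vertex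
`v ∈ {F_{p,b}}` with `v(j·e₁) = a` for all `1 ≤ j ≤ c₁`: its value `v(0)` is uniquely
determined. -/
theorem stmt_19 (c1 : ℕ) (hc1 : 1 ≤ c1) (A : Type) [Fintype A] [Nonempty A]
    (f : (↥(P19 c1) → A) → A → A) (hf : ∀ p, Function.Bijective (f p)) (a : A) :
    Set.Subsingleton {v : ↥(T19 c1) → A |
      (∃ p b, v = F19 c1 f p b) ∧
      ∀ (m : ℕ × ℕ) (hm : m ∈ T19 c1), 1 ≤ m.1 → v ⟨m, hm⟩ = a} :=
  stmt_19_general c1 hc1 A f hf a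
end
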